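/- arXiv:1804.04310 — 4 statements merged into one kernel-verified Lean document; each statement's English description precedes it below -/
import Mathlib

section
/- The matrix H with H_{αβ} = ⟨w_α, w_β⟩ is symmetric and positive definite, and its minimum eigenvalue is at least 1. -/
open Matrix

noncomputable def edgBasisMatrix {n : ℕ} (α : Fin n × Fin n) : Matrix (Fin n) (Fin n) ℝ :=
  Matrix.single α.1 α.1 1 + Matrix.single α.2 α.2 1
    - Matrix.single α.1 α.2 1 - Matrix.single α.2 α.1 1

noncomputable def edgH (n : ℕ) :
    Matrix {p : Fin n × Fin n // p.1 < p.2} {p : Fin n × Fin n // p.1 < p.2} ℝ :=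
  fun α β => Matrix.trace ((edgBasisMatrix α.val)ᵀ * edgBasisMatrix β.val)

/-!
`H = Wᵀ W`, where the columns of `W` are the vectorised basis matrices `w_α`. For `α = (i, j)`
with `i < j`, the only basis matrix with a nonzero `(i, j)` entry is `w_α`, where it is `-1`.
So the rows of `W` that read off the entries `(i, j)`, `i < j`, form the matrix `-1`, and
`vᵀ H v = ‖W v‖² ≥ ‖v‖²`: the matrix `H - 1` is positive semidefinite. Hence `H` is positive
definite, and `H - μ` is positive definite, so invertible, for every `μ < 1`.
-/

namespace Matrix

variable {ι κ : Type*} [Fintype ι] [Fintype κ]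

theorem dotProduct_self_comp_le {R : Type*} [Ring R] [LinearOrder R] [IsStrictOrderedRing R]
    {f : κ → ι} (hf : Function.Injective f) (u : ι → R) :
    (u ∘ f) ⬝ᵥ (u ∘ f) ≤ u ⬝ᵥ u := by
  calc ∑ a, u (f a) * u (f a) = ∑ p ∈ Finset.univ.map ⟨f, hf⟩, u p * u p :=
        (Finset.sum_map Finset.univ ⟨f, hf⟩ fun p => u p * u p).symm
    _ ≤ ∑ p, u p * u p := Finset.sum_le_univ_sum_of_nonneg fun p => mul_self_nonneg (u p)

theorem posSemidef_transpose_mul_self_sub_one [DecidableEq κ] {W : Matrix ι κ ℝ} {f : κ → ι}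
    (hf : Function.Injective f) (hW : W.submatrix f id = -1) :
    (Wᵀ * W - 1).PosSemidef := by
  have hherm : (Wᵀ * W - 1).IsHermitian := by
    rw [← conjTranspose_eq_transpose_of_trivial]
    exact (isHermitian_conjTranspose_mul_self W).sub isHermitian_one
  refine .of_dotProduct_mulVec_nonneg hherm fun v => ?_
  have hrows : (W *ᵥ v) ∘ f = -v :=
    calc (W *ᵥ v) ∘ f = W.submatrix f id *ᵥ v := rfl
      _ = -v := by rw [hW, neg_mulVec, one_mulVec]
  have := dotProduct_self_comp_le hf (W *ᵥ v)
  rw [hrows, neg_dotProduct_neg] at this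
  rw [star_trivial, sub_mulVec, one_mulVec, dotProduct_sub, ← mulVec_mulVec, mulVec_transpose,
    dotProduct_comm v, ← dotProduct_mulVec]
  linarith

theorem le_of_mem_spectrum_of_posSemidef_sub_smul [DecidableEq ι] {A : Matrix ι ι ℝ} {c μ : ℝ}
    (hA : (A - c • 1).PosSemidef) (hμ : μ ∈ spectrum ℝ A) : c ≤ μ := by
  by_contra! hlt
  have hpos : (A - c • 1 + (c - μ) • 1).PosDef :=
    PosDef.posSemidef_add hA (PosDef.one.smul (sub_pos.mpr hlt))
  apply spectrum.mem_iff.mp hμ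
  rw [Algebra.algebraMap_eq_smul_one, ← neg_sub, IsUnit.neg_iff]
  convert hpos.isUnit using 1
  module

end Matrix

noncomputable def edgW (n : ℕ) : Matrix (Fin n × Fin n) {p : Fin n × Fin n // p.1 < p.2} ℝ :=
  of fun p α => vec (edgBasisMatrix α.val) p

theorem edgH_eq_transpose_mul (n : ℕ) : edgH n = (edgW n)ᵀ * edgW n := by
  ext α β
  exact (vec_dotProduct_vec _ _).symm

theorem edgBasisMatrix_apply_of_lt {n : ℕ} {i j : Fin n} (hij : i < j) {α : Fin n × Fin n}
    (hα : α.1 < α.2) : edgBasisMatrix α i j = if α = (i, j) then -1 else 0 := by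
  obtain ⟨a, b⟩ := α
  simp only at hα
  simp only [edgBasisMatrix, Matrix.sub_apply, Matrix.add_apply, single_apply, Prod.mk.injEq]
  split_ifs <;> grind

-- `vec` stores the entry `(i, j)` at index `(j, i)`.
theorem edgW_submatrix (n : ℕ) :
    (edgW n).submatrix (fun α : {p : Fin n × Fin n // p.1 < p.2} => α.val.swap) id = -1 := by
  ext α β
  simp [edgW, edgBasisMatrix_apply_of_lt α.2 β.2, one_apply, Subtype.ext_iff, eq_comm, apply_ite]

/-- `H` is symmetric, positive definite, and its minimum eigenvalue is at least `1`. -/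
theorem edg_H_posdef (n : ℕ) :
    (edgH n).IsSymm ∧ (edgH n).PosDef ∧ ∀ μ ∈ spectrum ℝ (edgH n), (1 : ℝ) ≤ μ := by
  have hshift : (edgH n - 1).PosSemidef := by
    rw [edgH_eq_transpose_mul]
    exact posSemidef_transpose_mul_self_sub_one
      (Prod.swap_injective.comp Subtype.val_injective) (edgW_submatrix n)
  have hpos : (edgH n).PosDef := by
    simpa using PosDef.posSemidef_add hshift PosDef.one
  refine ⟨isHermitian_iff_isSymm.mp hpos.isHermitian, hpos, fun μ hμ => ?_⟩
  exact le_of_mem_spectrum_of_posSemidef_sub_smul (by rwa [one_smul]) hμ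
end

section
/- The inverse of H has explicit entries: H^{-1}_{αβ} equals ((n-1)²+1)/(2n²) if α = β; 1/n² if {α₁,α₂} and {β₁,β₂} are disjoint; and (4-2n)/(4n²) if they share exactly one index. -/
open Matrix

/-- The explicit candidate for `H⁻¹`: `((n-1)²+1)/(2n²)` on the diagonal, `1/n²` when the
index sets are disjoint, and `(4-2n)/(4n²)` when they share exactly one index. -/
noncomputable def edgHinv (n : ℕ) :
    Matrix {p : Fin n × Fin n // p.1 < p.2} {p : Fin n × Fin n // p.1 < p.2} ℝ :=
  fun α β =>
    if α = β then (((n : ℝ) - 1) ^ 2 + 1) / (2 * (n : ℝ) ^ 2)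
    else if α.val.1 ≠ β.val.1 ∧ α.val.1 ≠ β.val.2 ∧ α.val.2 ≠ β.val.1 ∧ α.val.2 ≠ β.val.2
      then 1 / (n : ℝ) ^ 2
    else (4 - 2 * (n : ℝ)) / (4 * (n : ℝ) ^ 2)

/-!
Writing `u_α = e_{α₁} - e_{α₂}`, the basis matrix is `w_α = u_α u_αᵀ`, so
`H_αβ = tr (w_αᵀ w_β) = (u_α ⬝ u_β)²`, which is `4`, `1` or `0`. Hence `H = 2 I + N Nᵀ`, where `N` is
the edge-vertex incidence matrix of the complete graph `K_n`. Every vertex lies on `n - 1` edges and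
every two vertices on exactly one, so `Nᵀ N = (n - 2) I + J`; with the row sums `N 𝟙 = 2 𝟙` this gives
`A² = (n - 2) A + 4 J` and `A J = 2 (n - 1) J` for `A = N Nᵀ` and the all-ones matrix `J` on edges.
In the algebra spanned by `I, A, J` the inverse of `2 I + A` is `I / 2 - A / (2 n) + J / n²`, and
reading off its entries gives the claimed matrix.
-/

/-- The relations keep `span {1, a, j}` stable under left multiplication by `a`, so a right inverse
of `2 • 1 + a` can be sought there; its three coefficients solve a linear system. -/
theorem mul_eq_one_of_mul_self_eq {K A : Type*} [Field K] [Ring A] [Algebra K A]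
    {c : K} (hc : c ≠ 0) (h2 : (2 : K) ≠ 0) {a j : A}
    (haa : a * a = (c - 2) • a + (4 : K) • j) (haj : a * j = (2 * c - 2) • j) :
    ((2 : K) • 1 + a) * ((1 / 2 : K) • 1 - (1 / (2 * c)) • a + (1 / c ^ 2) • j) = 1 := by
  simp only [add_mul, mul_add, mul_sub, smul_mul_assoc, mul_smul_comm, one_mul, mul_one,
    haa, haj, smul_add, smul_smul]
  match_scalars <;> field_simp <;> ring

theorem Matrix.trace_transpose_vecMulVec_self_mul {m R : Type*} [Fintype m] [CommRing R]
    (u v : m → R) : trace ((vecMulVec u u)ᵀ * vecMulVec v v) = (u ⬝ᵥ v) ^ 2 := by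
  rw [transpose_vecMulVec, vecMulVec_mul_vecMulVec, trace_vecMulVec, dotProduct_smul,
    smul_eq_mul, sq]

abbrev Edge (n : ℕ) := {p : Fin n × Fin n // p.1 < p.2}

namespace Edge

variable {R : Type*} [CommRing R] {n : ℕ}

theorem sum_eq {M : Type*} [AddCommMonoid M] (f : Fin n × Fin n → M) :
    ∑ e : Edge n, f e.1 = ∑ a, ∑ b, if a < b then f (a, b) else 0 := by
  rw [← Finset.sum_subtype {p | p.1 < p.2} (by simp) f, Finset.sum_filter, Fintype.sum_prod_type]

variable (R n) in
def incidence : Matrix (Edge n) (Fin n) R :=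
  fun e => Pi.single e.1.1 1 + Pi.single e.1.2 1

theorem incidence_apply (e : Edge n) (i : Fin n) :
    incidence R n e i = (if i = e.1.1 then 1 else 0) + (if i = e.1.2 then 1 else 0) := by
  simp [incidence, Pi.single_apply]

theorem incidence_mul_transpose_apply (α β : Edge n) :
    (incidence R n * (incidence R n)ᵀ) α β =
      if α = β then 2
      else if α.val.1 ≠ β.val.1 ∧ α.val.1 ≠ β.val.2 ∧ α.val.2 ≠ β.val.1 ∧ α.val.2 ≠ β.val.2
        then 0 else 1 := by
  obtain ⟨⟨a₁, a₂⟩, ha : a₁ < a₂⟩ := α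
  obtain ⟨⟨b₁, b₂⟩, hb : b₁ < b₂⟩ := β
  simp only [mul_apply', transpose_apply, incidence, add_dotProduct, single_dotProduct,
    Pi.add_apply, Pi.single_apply, one_mul, Subtype.mk.injEq, Prod.mk.injEq]
  simp only [ne_eq, Fin.ext_iff] at *
  split_ifs <;> first | omega | norm_num

theorem incidence_mulVec_one : incidence R n *ᵥ 1 = (2 : R) • 1 := by
  ext e
  simp [mulVec, dotProduct, incidence_apply, Finset.sum_add_distrib, one_add_one_eq_two]

theorem incidence_apply_mul_self (e : Edge n) (i : Fin n) :
    incidence R n e i * incidence R n e i = incidence R n e i := by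
  have hne := e.2.ne
  rw [incidence_apply]
  split_ifs <;> simp_all

theorem sum_incidence_apply (i : Fin n) : ∑ e, incidence R n e i = n - 1 := by
  have hcount : ∑ e, incidence R n e i = ((Finset.Ioi i).card + (Finset.Iio i).card : ℕ) := by
    simp only [incidence_apply]
    rw [sum_eq (fun p => (if i = p.1 then (1 : R) else 0) + if i = p.2 then 1 else 0)]
    simp only [ite_add_zero, Finset.sum_add_distrib]
    rw [Finset.sum_comm (f := fun a b => if a < b then if i = b then (1 : R) else 0 else 0)]
    simp only [← ite_and]
    simp only [and_comm, ite_and, Finset.sum_ite_irrel, Finset.sum_boole, Finset.sum_const_zero,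
      Finset.sum_ite_eq, Finset.mem_univ, if_true, Finset.filter_lt_eq_Ioi,
      Finset.filter_gt_eq_Iio, Nat.cast_add]
  rw [hcount, Fin.card_Ioi, Fin.card_Iio, Nat.sub_add_cancel (Nat.le_sub_one_of_lt i.isLt),
    Nat.cast_sub (Nat.one_le_of_lt i.isLt), Nat.cast_one]

theorem sum_incidence_mul_incidence_of_lt {i j : Fin n} (hij : i < j) :
    ∑ e, incidence R n e i * incidence R n e j = 1 := by
  have h (e : Edge n) :
      incidence R n e i * incidence R n e j = if e = ⟨(i, j), hij⟩ then 1 else 0 := by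
    obtain ⟨⟨a, b⟩, hab : a < b⟩ := e
    simp only [incidence_apply, Subtype.mk.injEq, Prod.mk.injEq]
    simp only [Fin.ext_iff] at *
    split_ifs <;> first | omega | norm_num
  simp [h]

theorem transpose_incidence_mul_incidence :
    (incidence R n)ᵀ * incidence R n = ((n : R) - 2) • 1 + vecMulVec 1 1 := by
  ext i j
  simp only [mul_apply, transpose_apply, Matrix.add_apply, Matrix.smul_apply, one_apply,
    vecMulVec_apply, Pi.one_apply, smul_eq_mul, mul_one, mul_ite, mul_zero]
  rcases lt_trichotomy i j with h | rfl | h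
  · simp [sum_incidence_mul_incidence_of_lt h, h.ne]
  · simp only [incidence_apply_mul_self, sum_incidence_apply, if_true]
    ring
  · simp only [mul_comm (incidence R n _ i), sum_incidence_mul_incidence_of_lt h, h.ne',
      if_false, zero_add]

theorem transpose_incidence_mulVec_one : (incidence R n)ᵀ *ᵥ 1 = ((n : R) - 1) • 1 := by
  ext i
  simp [mulVec, dotProduct, sum_incidence_apply]

theorem incidence_mul_transpose_mul_self :
    incidence R n * (incidence R n)ᵀ * (incidence R n * (incidence R n)ᵀ) =
      ((n : R) - 2) • (incidence R n * (incidence R n)ᵀ)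
        + (4 : R) • vecMulVec (1 : Edge n → R) 1 := by
  calc incidence R n * (incidence R n)ᵀ * (incidence R n * (incidence R n)ᵀ)
      = incidence R n * ((incidence R n)ᵀ * incidence R n) * (incidence R n)ᵀ := by
        simp only [Matrix.mul_assoc]
    _ = _ := by
      rw [transpose_incidence_mul_incidence, Matrix.mul_add, Matrix.add_mul, Matrix.mul_smul,
        Matrix.mul_one, Matrix.smul_mul, mul_vecMulVec, vecMulVec_mul, vecMul_transpose,
        incidence_mulVec_one, smul_vecMulVec, vecMulVec_smul, smul_smul]
      norm_num

theorem incidence_mul_transpose_mul_vecMulVec_one :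
    incidence R n * (incidence R n)ᵀ * vecMulVec (1 : Edge n → R) (1 : Edge n → R) =
      (2 * (n : R) - 2) • vecMulVec (1 : Edge n → R) (1 : Edge n → R) := by
  rw [mul_vecMulVec, ← mulVec_mulVec, transpose_incidence_mulVec_one, mulVec_smul,
    incidence_mulVec_one, smul_smul, smul_vecMulVec]
  congr 1
  ring

end Edge

open Edge

theorem edgBasisMatrix_eq_vecMulVec {n : ℕ} (p : Fin n × Fin n) :
    edgBasisMatrix p =
      vecMulVec (Pi.single p.1 1 - Pi.single p.2 1) (Pi.single p.1 1 - Pi.single p.2 1) := by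
  simp only [edgBasisMatrix, single_eq_single_vecMulVec_single, vecMulVec_sub, sub_vecMulVec]
  abel

theorem edgH_apply {n : ℕ} (α β : Edge n) :
    edgH n α β =
      if α = β then 4
      else if α.val.1 ≠ β.val.1 ∧ α.val.1 ≠ β.val.2 ∧ α.val.2 ≠ β.val.1 ∧ α.val.2 ≠ β.val.2
        then 0 else 1 := by
  obtain ⟨⟨a₁, a₂⟩, ha : a₁ < a₂⟩ := α
  obtain ⟨⟨b₁, b₂⟩, hb : b₁ < b₂⟩ := β
  simp only [edgH, edgBasisMatrix_eq_vecMulVec, trace_transpose_vecMulVec_self_mul,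
    sub_dotProduct, dotProduct_sub, single_dotProduct, Pi.single_apply, one_mul,
    Subtype.mk.injEq, Prod.mk.injEq]
  simp only [ne_eq, Fin.ext_iff] at *
  split_ifs <;> first | omega | norm_num

theorem edgH_eq (n : ℕ) : edgH n = (2 : ℝ) • 1 + incidence ℝ n * (incidence ℝ n)ᵀ := by
  ext α β
  rw [edgH_apply, Matrix.add_apply, incidence_mul_transpose_apply, Matrix.smul_apply, one_apply]
  split_ifs <;> norm_num

theorem edgHinv_eq {n : ℕ} (hn : (n : ℝ) ≠ 0) :
    edgHinv n = (1 / 2 : ℝ) • 1 - (1 / (2 * (n : ℝ))) • (incidence ℝ n * (incidence ℝ n)ᵀ)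
      + (1 / (n : ℝ) ^ 2) • vecMulVec (1 : Edge n → ℝ) 1 := by
  ext α β
  simp only [edgHinv, Matrix.add_apply, Matrix.sub_apply, Matrix.smul_apply,
    incidence_mul_transpose_apply, one_apply, vecMulVec_apply, Pi.one_apply, smul_eq_mul]
  split_ifs <;> field_simp <;> ring

/-- The matrix `edgHinv n` is indeed the inverse of `H`. -/
theorem edg_H_inverse (n : ℕ) (hn : 2 ≤ n) :
    edgH n * edgHinv n = 1 ∧ edgHinv n * edgH n = 1 := by
  have hn₀ : (n : ℝ) ≠ 0 := Nat.cast_ne_zero.mpr (by omega)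
  have h : edgH n * edgHinv n = 1 := by
    rw [edgH_eq, edgHinv_eq hn₀]
    exact mul_eq_one_of_mul_self_eq hn₀ two_ne_zero incidence_mul_transpose_mul_self
      incidence_mul_transpose_mul_vecMulVec_one
  exact ⟨h, mul_eq_one_comm.mp h⟩
end

section
/- For any symmetric matrix X with zero row sums, the sum over all pairs α of ⟨X, w_α⟩² satisfies ||X||_F² ≤ Σ_α ⟨X, w_α⟩² ≤ 2n||X||_F². -/
/-!
For `α = (a, b)` one has `⟨X, w_α⟩ = X_aa + X_bb - 2 X_ab`. Summing the squares over all ordered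
pairs, symmetry and the zero row sums kill the cross terms, which leaves
`Σ_α ⟨X, w_α⟩² = n Σ_i X_ii² + 2 ‖X‖_F² + (tr X)²`. The lower bound is then immediate. For the
upper one, Cauchy–Schwarz gives `(tr X)² ≤ n Σ_i X_ii²`, and applied to `X_ii = -Σ_{j ≠ i} X_ij`
it gives `n X_ii² ≤ (n - 1) Σ_j X_ij²`.
-/

open Matrix

open Finset

theorem two_nsmul_sum_filter_lt_eq_sum_sum {ι M : Type*} [Fintype ι] [LinearOrder ι]
    [AddCommMonoid M] (f : ι → ι → M) (hsymm : ∀ i j, f i j = f j i) (hdiag : ∀ i, f i i = 0) :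
    2 • ∑ p ∈ univ.filter (fun p : ι × ι => p.1 < p.2), f p.1 p.2 = ∑ i, ∑ j, f i j := by
  rw [← sum_product', univ_product_univ,
    ← sum_filter_add_sum_filter_not univ (fun p : ι × ι => p.1 < p.2),
    ← sum_filter_add_sum_filter_not (univ.filter fun p : ι × ι => ¬ p.1 < p.2)
      (fun p => p.2 < p.1)]
  have hswap : ∑ p ∈ (univ.filter fun p : ι × ι => ¬ p.1 < p.2).filter (fun p => p.2 < p.1),
      f p.1 p.2 = ∑ p ∈ univ.filter (fun p : ι × ι => p.1 < p.2), f p.1 p.2 := by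
    refine sum_equiv (Equiv.prodComm ι ι) (fun p => ?_) (fun p _ => hsymm _ _)
    simp only [mem_filter, mem_univ, true_and, Equiv.prodComm_apply, Prod.fst_swap, Prod.snd_swap]
    exact ⟨fun h => h.2, fun h => ⟨not_lt.2 h.le, h⟩⟩
  have hon_diag : ∑ p ∈ (univ.filter fun p : ι × ι => ¬ p.1 < p.2).filter (fun p => ¬ p.2 < p.1),
      f p.1 p.2 = 0 := by
    refine sum_eq_zero fun p hp => ?_
    simp only [mem_filter, mem_univ, true_and, not_lt] at hp
    rw [le_antisymm hp.2 hp.1, hdiag]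
  rw [hswap, hon_diag, add_zero, two_nsmul]

theorem card_mul_sq_le_of_sum_eq_zero {ι : Type*} [Fintype ι] {v : ι → ℝ}
    (hv : ∑ i, v i = 0) (k : ι) :
    Fintype.card ι * v k ^ 2 ≤ (Fintype.card ι - 1) * ∑ i, v i ^ 2 := by
  classical
  have hsum : v k + ∑ i ∈ univ.erase k, v i = 0 := by rwa [add_sum_erase _ _ (mem_univ k)]
  have hsq : v k ^ 2 + ∑ i ∈ univ.erase k, v i ^ 2 = ∑ i, v i ^ 2 :=
    add_sum_erase _ (fun i => v i ^ 2) (mem_univ k)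
  have hcard : ((univ.erase k).card : ℝ) = Fintype.card ι - 1 := by
    rw [card_erase_of_mem (mem_univ k), card_univ, Nat.cast_pred (Fintype.card_pos_iff.2 ⟨k⟩)]
  have hcs := sq_sum_le_card_mul_sum_sq (s := univ.erase k) (f := v)
  rw [hcard, show ∑ i ∈ univ.erase k, v i = -v k by linarith, neg_sq] at hcs
  rw [← hsq]
  linear_combination hcs

theorem sum_sum_sq_add_sub_two_mul {ι : Type*} [Fintype ι] (X : Matrix ι ι ℝ)
    (hrow : ∀ i, ∑ j, X i j = 0) (hcol : ∀ j, ∑ i, X i j = 0) :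
    ∑ i, ∑ j, (X i i + X j j - 2 * X i j) ^ 2 =
      2 * Fintype.card ι * ∑ i, X i i ^ 2 + 4 * ∑ i, ∑ j, X i j ^ 2 + 2 * (∑ i, X i i) ^ 2 := by
  have expand : ∀ i j, (X i i + X j j - 2 * X i j) ^ 2 = X i i ^ 2 + X j j ^ 2 + 4 * X i j ^ 2
      + 2 * (X i i * X j j) - 4 * (X i i * X i j) - 4 * (X j j * X i j) := fun i j => by ring
  have hcross : ∑ i, ∑ j, X j j * X i j = 0 := by
    rw [sum_comm]; simp only [← mul_sum, hcol, mul_zero, sum_const_zero]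
  simp only [expand, sum_add_distrib, sum_sub_distrib, ← mul_sum, hrow, mul_zero, sum_const_zero,
    hcross, sum_const, card_univ, nsmul_eq_mul, ← sum_mul]
  ring

theorem card_mul_sum_diag_sq_le {ι : Type*} [Fintype ι] {X : Matrix ι ι ℝ}
    (hrow : ∀ i, ∑ j, X i j = 0) :
    Fintype.card ι * ∑ i, X i i ^ 2 ≤ (Fintype.card ι - 1) * ∑ i, ∑ j, X i j ^ 2 := by
  rw [mul_sum, mul_sum]
  exact sum_le_sum fun i _ => card_mul_sq_le_of_sum_eq_zero (hrow i) i

theorem trace_transpose_mul_edgBasisMatrix {n : ℕ} {X : Matrix (Fin n) (Fin n) ℝ}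
    (hX : X.IsSymm) (α : Fin n × Fin n) :
    trace (Xᵀ * edgBasisMatrix α) = X α.1 α.1 + X α.2 α.2 - 2 * X α.1 α.2 := by
  simp only [edgBasisMatrix, Matrix.mul_add, Matrix.mul_sub, trace_add, trace_sub,
    trace_mul_single, MulOpposite.op_one, one_smul, transpose_apply, hX.apply α.1 α.2]
  ring

theorem sum_sq_trace_transpose_mul_edgBasisMatrix {n : ℕ} {X : Matrix (Fin n) (Fin n) ℝ}
    (hsymm : X.IsSymm) (hrow : ∀ i, ∑ j, X i j = 0) :
    ∑ α ∈ univ.filter (fun p : Fin n × Fin n => p.1 < p.2), trace (Xᵀ * edgBasisMatrix α) ^ 2 =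
      n * ∑ i, X i i ^ 2 + 2 * ∑ i, ∑ j, X i j ^ 2 + (∑ i, X i i) ^ 2 := by
  have hcol : ∀ j, ∑ i, X i j = 0 := fun j => by simpa only [hsymm.apply] using hrow j
  have hdouble := two_nsmul_sum_filter_lt_eq_sum_sum (fun i j => (X i i + X j j - 2 * X i j) ^ 2)
    (fun i j => by rw [hsymm.apply i j]; ring) (fun i => by ring)
  rw [sum_sum_sq_add_sub_two_mul X hrow hcol, Fintype.card_fin, two_nsmul] at hdouble
  simp only [trace_transpose_mul_edgBasisMatrix hsymm]
  linarith

/-- For any symmetric `X` with zero row sums,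
`‖X‖_F² ≤ Σ_α ⟨X, w_α⟩² ≤ 2n ‖X‖_F²`, summing over all pairs `α₁ < α₂`. -/
theorem edg_norm_equivalence {n : ℕ} (X : Matrix (Fin n) (Fin n) ℝ)
    (hsymm : X.IsSymm) (h1 : X *ᵥ (fun _ => (1 : ℝ)) = 0) :
    (∑ i, ∑ j, X i j ^ 2) ≤
        (∑ α ∈ Finset.univ.filter (fun p : Fin n × Fin n => p.1 < p.2),
          Matrix.trace (Xᵀ * edgBasisMatrix α) ^ 2) ∧
      (∑ α ∈ Finset.univ.filter (fun p : Fin n × Fin n => p.1 < p.2),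
          Matrix.trace (Xᵀ * edgBasisMatrix α) ^ 2) ≤
        2 * n * (∑ i, ∑ j, X i j ^ 2) := by
  have hrow : ∀ i, ∑ j, X i j = 0 := fun i => by
    simpa [mulVec, dotProduct] using congrFun h1 i
  rw [sum_sq_trace_transpose_mul_edgBasisMatrix hsymm hrow]
  have hdiag : 0 ≤ ∑ i, X i i ^ 2 := sum_nonneg fun i _ => sq_nonneg _
  have hfrob : 0 ≤ ∑ i, ∑ j, X i j ^ 2 := sum_nonneg fun i _ => sum_nonneg fun j _ => sq_nonneg _
  have htrace : (∑ i, X i i) ^ 2 ≤ n * ∑ i, X i i ^ 2 := by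
    simpa using sq_sum_le_card_mul_sum_sq (s := univ) (f := fun i => X i i)
  have hdiag_bound : (n : ℝ) * ∑ i, X i i ^ 2 ≤ (n - 1) * ∑ i, ∑ j, X i j ^ 2 := by
    simpa using card_mul_sum_diag_sq_le hrow
  constructor
  · linarith [sq_nonneg (∑ i, X i i), mul_nonneg (Nat.cast_nonneg (α := ℝ) n) hdiag]
  · linarith
end

section
/- If M is an n×n symmetric rank-r matrix whose column space U satisfies the standard coherence bound ||P_U e_i||² ≤ νr/n for all i, then for every EDG basis matrix w_α, ||P_T w_α||_F² ≤ 16νr/n, where P_T is the projection onto the tangent space at M. -/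
/-!
Write `w_α = v vᵀ` with `v = e_a - e_b` and `P = U Uᵀ`. Then `P_T w_α = u vᵀ + v uᵀ - u uᵀ` with
`u = P v`, and because `P` is an orthogonal projection, `u ⬝ u = u ⬝ v = ‖Uᵀ v‖²`. Expanding the
Frobenius norm gives `‖P_T w_α‖² = 2 ‖Uᵀ v‖² ‖v‖² - ‖Uᵀ v‖⁴ ≤ 2 ‖Uᵀ v‖² ‖v‖²`. Finally `‖v‖² ≤ 2`,
and `Uᵀ v` is the difference of rows `a` and `b` of `U`, so coherence gives `‖Uᵀ v‖² ≤ 4 ν r / n`.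
-/

open Matrix

theorem dotProduct_sub_self_le {m R : Type*} [Fintype m] [CommRing R] [LinearOrder R]
    [IsStrictOrderedRing R] (x y : m → R) : (x - y) ⬝ᵥ (x - y) ≤ 2 * (x ⬝ᵥ x + y ⬝ᵥ y) := by
  simp only [dotProduct, ← Finset.sum_add_distrib, Finset.mul_sum, Pi.sub_apply]
  exact Finset.sum_le_sum fun i _ => by nlinarith [sq_nonneg (x i + y i)]

section TangentProjection

variable {m k R : Type*} [Fintype m] [Fintype k] [CommRing R]

/-- The paper's `P_T`, when the columns of `U` are an orthonormal basis of the column space. -/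
def tangentProj (U : Matrix m k R) (X : Matrix m m R) : Matrix m m R :=
  U * Uᵀ * X + X * (U * Uᵀ) - U * Uᵀ * X * (U * Uᵀ)

theorem tangentProj_vecMulVec_self (U : Matrix m k R) (v : m → R) :
    tangentProj U (vecMulVec v v) =
      vecMulVec ((U * Uᵀ) *ᵥ v) v + vecMulVec v ((U * Uᵀ) *ᵥ v)
        - vecMulVec ((U * Uᵀ) *ᵥ v) ((U * Uᵀ) *ᵥ v) := by
  have hsymm : v ᵥ* (U * Uᵀ) = (U * Uᵀ) *ᵥ v := by
    rw [← vecMul_transpose, transpose_mul, transpose_transpose]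
  simp only [tangentProj, mul_vecMulVec, vecMulVec_mul, hsymm]

theorem mul_transpose_mulVec_dotProduct (U : Matrix m k R) (v w : m → R) :
    (U * Uᵀ) *ᵥ v ⬝ᵥ w = Uᵀ *ᵥ v ⬝ᵥ Uᵀ *ᵥ w := by
  rw [← mulVec_mulVec, dotProduct_comm, dotProduct_mulVec, ← mulVec_transpose, dotProduct_comm]

theorem sum_sq_vecMulVec_add_vecMulVec_sub (u v : m → R) :
    ∑ i, ∑ j, ((vecMulVec u v + vecMulVec v u - vecMulVec u u) i j) ^ 2 =
      2 * (u ⬝ᵥ u) * (v ⬝ᵥ v) + 2 * (u ⬝ᵥ v) ^ 2 + (u ⬝ᵥ u) ^ 2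
        - 4 * (u ⬝ᵥ u) * (u ⬝ᵥ v) := by
  have hexpand : ∀ i j, (u i * v j + v i * u j - u i * u j) ^ 2 =
      u i * u i * (v j * v j) + v i * v i * (u j * u j) + u i * u i * (u j * u j)
        + 2 * (u i * v i) * (u j * v j) - 2 * (u i * u i) * (u j * v j)
        - 2 * (u i * v i) * (u j * u j) := fun i j => by ring
  simp only [Matrix.add_apply, Matrix.sub_apply, vecMulVec_apply, hexpand, Finset.sum_add_distrib,
    Finset.sum_sub_distrib, ← Finset.mul_sum, ← Finset.sum_mul, dotProduct]
  ring

end TangentProjection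

theorem sum_sq_tangentProj_vecMulVec_self_le {m k : Type*} [Fintype m] [Fintype k]
    [DecidableEq k] {U : Matrix m k ℝ} (hU : Uᵀ * U = 1) (v : m → ℝ) :
    ∑ i, ∑ j, (tangentProj U (vecMulVec v v) i j) ^ 2 ≤
      2 * (Uᵀ *ᵥ v ⬝ᵥ Uᵀ *ᵥ v) * (v ⬝ᵥ v) := by
  have hproj : (U * Uᵀ) *ᵥ v ⬝ᵥ (U * Uᵀ) *ᵥ v = Uᵀ *ᵥ v ⬝ᵥ Uᵀ *ᵥ v := by
    rw [mul_transpose_mulVec_dotProduct, mulVec_mulVec, ← Matrix.mul_assoc, hU, Matrix.one_mul]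
  rw [tangentProj_vecMulVec_self, sum_sq_vecMulVec_add_vecMulVec_sub, hproj,
    mul_transpose_mulVec_dotProduct]
  nlinarith [sq_nonneg (Uᵀ *ᵥ v ⬝ᵥ Uᵀ *ᵥ v)]

def edgVector {n : ℕ} (α : Fin n × Fin n) : Fin n → ℝ :=
  Pi.single α.1 1 - Pi.single α.2 1

theorem edgBasisMatrix_eq_vecMulVec_edgVector {n : ℕ} (α : Fin n × Fin n) :
    edgBasisMatrix α = vecMulVec (edgVector α) (edgVector α) := by
  simp only [edgBasisMatrix, edgVector, single_eq_single_vecMulVec_single, vecMulVec_sub,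
    sub_vecMulVec]
  abel

theorem edgVector_dotProduct_self_le {n : ℕ} (α : Fin n × Fin n) :
    edgVector α ⬝ᵥ edgVector α ≤ 2 := by
  simp only [edgVector, sub_dotProduct, dotProduct_sub, single_dotProduct, Pi.single_apply]
  split_ifs <;> norm_num

theorem transpose_mulVec_edgVector {n : ℕ} {k : Type*} [Fintype k] (U : Matrix (Fin n) k ℝ)
    (α : Fin n × Fin n) : Uᵀ *ᵥ edgVector α = U α.1 - U α.2 := by
  rw [edgVector, mulVec_sub, mulVec_single_one, mulVec_single_one, col_transpose]
  rfl

theorem edg_coherence_PT_w_general {n r : ℕ} (ν : ℝ) (U : Matrix (Fin n) (Fin r) ℝ)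
    (hU : Uᵀ * U = 1)
    (hcoh : ∀ i : Fin n, ∑ k, (U i k) ^ 2 ≤ ν * r / n)
    (α : Fin n × Fin n) :
    (∑ i, ∑ j,
        ((U * Uᵀ * edgBasisMatrix α + edgBasisMatrix α * (U * Uᵀ)
          - U * Uᵀ * edgBasisMatrix α * (U * Uᵀ)) i j) ^ 2)
      ≤ 16 * ν * r / n := by
  set v := edgVector α
  have hrow : ∀ i, U i ⬝ᵥ U i ≤ ν * r / n := fun i => by
    simpa only [dotProduct, sq] using hcoh i
  have hUv : Uᵀ *ᵥ v ⬝ᵥ Uᵀ *ᵥ v ≤ 2 * (ν * r / n + ν * r / n) := by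
    rw [transpose_mulVec_edgVector]
    exact (dotProduct_sub_self_le _ _).trans (by gcongr <;> apply hrow)
  have hUv_nonneg : 0 ≤ Uᵀ *ᵥ v ⬝ᵥ Uᵀ *ᵥ v :=
    Finset.sum_nonneg fun i _ => mul_self_nonneg _
  calc _ = ∑ i, ∑ j, (tangentProj U (vecMulVec v v) i j) ^ 2 := by
        rw [← edgBasisMatrix_eq_vecMulVec_edgVector]; rfl
    _ ≤ 2 * (Uᵀ *ᵥ v ⬝ᵥ Uᵀ *ᵥ v) * (v ⬝ᵥ v) := sum_sq_tangentProj_vecMulVec_self_le hU v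
    _ ≤ 2 * (Uᵀ *ᵥ v ⬝ᵥ Uᵀ *ᵥ v) * 2 :=
        mul_le_mul_of_nonneg_left (edgVector_dotProduct_self_le α) (by linarith)
    _ ≤ 2 * (2 * (ν * r / n + ν * r / n)) * 2 := by gcongr
    _ = 16 * ν * r / n := by ring

/-- If the column space `U` of a symmetric rank-`r` matrix satisfies the standard
coherence bound `‖P_U e_i‖² ≤ νr/n` for all `i`, then every EDG basis matrix satisfies
`‖P_T w_α‖_F² ≤ 16 ν r / n`, where `P_T X = P_U X + X P_U - P_U X P_U`. -/
theorem edg_coherence_PT_w {n r : ℕ} (ν : ℝ) (U : Matrix (Fin n) (Fin r) ℝ)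
    (hU : Uᵀ * U = 1)
    (hcoh : ∀ i : Fin n, ∑ k, (U i k) ^ 2 ≤ ν * r / n)
    (α : Fin n × Fin n) (hα : α.1 < α.2) :
    (∑ i, ∑ j,
        ((U * Uᵀ * edgBasisMatrix α + edgBasisMatrix α * (U * Uᵀ)
          - U * Uᵀ * edgBasisMatrix α * (U * Uᵀ)) i j) ^ 2)
      ≤ 16 * ν * r / n :=
  edg_coherence_PT_w_general ν U hU hcoh α
end
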